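/- In any category base, a set A is non-Baire if and only if A has the (*)-property: there exists a region C such that for every subregion D of C and every set E essentially containing D (i.e., D − E is meager), the set A ∩ E is non-Baire. -/

import Mathlib

structure CatBase (X : Type*) where
  regions : Set (Set X)
  nonempty_X : Nonempty X
  cover : ∀ x : X, ∃ A ∈ regions, x ∈ A
  ax2 : ∀ A ∈ regions, ∀ D : Set (Set X), D ⊆ regions → D.Nonempty →
    D.Pairwise Disjoint → Cardinal.mk D < Cardinal.mk regions →
    ((∃ B ∈ regions, B ⊆ A ∩ ⋃₀ D) → ∃ C ∈ D, ∃ B ∈ regions, B ⊆ A ∩ C) ∧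
    (¬ (∃ B ∈ regions, B ⊆ A ∩ ⋃₀ D) →
      ∃ B ∈ regions, B ⊆ A ∧ ∀ C ∈ D, Disjoint B C)

namespace CatBase

variable {X : Type*}

/-- A set is singular if every region contains a subregion disjoint from it. -/
def Singular (cb : CatBase X) (S : Set X) : Prop :=
  ∀ A ∈ cb.regions, ∃ B ∈ cb.regions, B ⊆ A ∧ Disjoint B S

/-- A set is meager if it is a countable union of singular sets. -/
def Meager (cb : CatBase X) (S : Set X) : Prop :=
  ∃ f : ℕ → Set X, (∀ n, cb.Singular (f n)) ∧ S = ⋃ n, f n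

def Abundant (cb : CatBase X) (S : Set X) : Prop := ¬ cb.Meager S

/-- A set is Baire if every region has a subregion in which the set or its complement is meager. -/
def Baire (cb : CatBase X) (S : Set X) : Prop :=
  ∀ A ∈ cb.regions, ∃ B ∈ cb.regions, B ⊆ A ∧
    (cb.Meager (S ∩ B) ∨ cb.Meager (Sᶜ ∩ B))

end CatBase

/-! Inside a region `D` with `D \ E` meager, the sets `A` and `A ∩ E` differ by a meager set, so
any subregion witnessing that `A ∩ E` is Baire also witnesses it for `A`. Conversely, `D = C` and
`E = X` turn the (*)-property at `C` into the non-Baireness of `A` itself. -/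

namespace CatBase

variable {X : Type*} {cb : CatBase X} {S T : Set X}

lemma Singular.mono (hST : T ⊆ S) (hS : cb.Singular S) : cb.Singular T := fun R hR =>
  let ⟨B, hB, hBR, hBS⟩ := hS R hR
  ⟨B, hB, hBR, hBS.mono_right hST⟩

lemma Singular.union (hS : cb.Singular S) (hT : cb.Singular T) : cb.Singular (S ∪ T) := by
  intro R hR
  obtain ⟨B₁, hB₁, hB₁R, hB₁S⟩ := hS R hR
  obtain ⟨B₂, hB₂, hB₂B₁, hB₂T⟩ := hT B₁ hB₁
  exact ⟨B₂, hB₂, hB₂B₁.trans hB₁R, Disjoint.union_right (hB₁S.mono_left hB₂B₁) hB₂T⟩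

lemma singular_empty (cb : CatBase X) : cb.Singular ∅ := fun R hR =>
  ⟨R, hR, subset_rfl, Set.disjoint_empty R⟩

lemma Meager.mono (hST : T ⊆ S) (hS : cb.Meager S) : cb.Meager T := by
  obtain ⟨f, hf, rfl⟩ := hS
  refine ⟨fun n => f n ∩ T, fun n => (hf n).mono Set.inter_subset_left, ?_⟩
  rw [← Set.iUnion_inter, Set.inter_eq_right.mpr hST]

lemma Meager.union (hS : cb.Meager S) (hT : cb.Meager T) : cb.Meager (S ∪ T) := by
  obtain ⟨f, hf, rfl⟩ := hS
  obtain ⟨g, hg, rfl⟩ := hT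
  exact ⟨fun n => f n ∪ g n, fun n => (hf n).union (hg n), Set.iUnion_union_distrib f g |>.symm⟩

lemma meager_empty (cb : CatBase X) : cb.Meager ∅ :=
  ⟨fun _ => ∅, fun _ => cb.singular_empty, Set.iUnion_empty.symm⟩

theorem baire_of_forall_exists_baire_inter {A : Set X}
    (h : ∀ C ∈ cb.regions, ∃ D ∈ cb.regions, D ⊆ C ∧
      ∃ E : Set X, cb.Meager (D \ E) ∧ cb.Baire (A ∩ E)) :
    cb.Baire A := by
  intro R hR
  obtain ⟨D, hD, hDR, E, hDE, hAE⟩ := h R hR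
  obtain ⟨B, hB, hBD, hAEB | hAEcB⟩ := hAE D hD
  · have hAB : A ∩ B ⊆ A ∩ E ∩ B ∪ D \ E := fun x ⟨hxA, hxB⟩ =>
      (em (x ∈ E)).imp (fun hxE => ⟨⟨hxA, hxE⟩, hxB⟩) (fun hxE => ⟨hBD hxB, hxE⟩)
    exact ⟨B, hB, hBD.trans hDR, .inl ((hAEB.union hDE).mono hAB)⟩
  · have hAcB : Aᶜ ∩ B ⊆ (A ∩ E)ᶜ ∩ B :=
      Set.inter_subset_inter_left B (Set.compl_subset_compl.mpr Set.inter_subset_left)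
    exact ⟨B, hB, hBD.trans hDR, .inr (hAEcB.mono hAcB)⟩

end CatBase

theorem stmt8 {X : Type*} (cb : CatBase X) (A : Set X) :
    ¬ cb.Baire A ↔
      ∃ C ∈ cb.regions, ∀ D ∈ cb.regions, D ⊆ C →
        ∀ E : Set X, cb.Meager (D \ E) → ¬ cb.Baire (A ∩ E) := by
  constructor
  · intro hA
    by_contra! h
    exact hA (CatBase.baire_of_forall_exists_baire_inter h)
  · rintro ⟨C, hC, hC_star⟩ hA
    have hCuniv : cb.Meager (C \ Set.univ) := by simpa using cb.meager_empty
    exact hC_star C hC subset_rfl Set.univ hCuniv (by simpa using hA)
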